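/- Let f : ℝ → ℝ be smooth and β, c, μ real constants. If p, u : ℝ × ℝ → ℝ are smooth and satisfy the first-layer potential system ∂ₓu = f′(p)·∂ₜp − μ ∂²ₓp and ∂ₜu = c² ∂ₓp + (β − μ) ∂ₜ∂ₓp at every point, then the following two continuity equations hold at every point: ∂ₜT₂ + ∂ₓΦ₂ = 0 with T₂ = −(u + μ ∂ₓp) and Φ₂ = c² p + β ∂ₜp; and ∂ₜT₃ + ∂ₓΦ₃ = 0 with T₃ = x·f(p) + t·(u + μ ∂ₓp) and Φ₃ = −c² t p − β t ∂ₜp − x·(u + μ ∂ₓp). (These are the nonlocal conservation laws of the first-layer potential system, with u + μ pₓ = ∂ₓ⁻¹(f(p)ₜ).) -/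

import Mathlib

noncomputable def Dt (F : ℝ × ℝ → ℝ) : ℝ × ℝ → ℝ :=
  fun z => deriv (fun s => F (s, z.2)) z.1

noncomputable def Dx (F : ℝ × ℝ → ℝ) : ℝ × ℝ → ℝ :=
  fun z => deriv (fun y => F (z.1, y)) z.2

/-- `(p, u)` solves the first-layer potential system
`uₓ = f'(p) pₜ − μ pₓₓ`, `uₜ = c² pₓ + (β − μ) pₜₓ` everywhere. -/
def FirstLayerPotentialSystem (f : ℝ → ℝ) (β c μ : ℝ) (p u : ℝ × ℝ → ℝ) : Prop :=
  ∀ z : ℝ × ℝ,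
    Dx u z = deriv f (p z) * Dt p z - μ * Dx (Dx p) z ∧
    Dt u z = c ^ 2 * Dx p z + (β - μ) * Dt (Dx p) z

lemma hasDerivAt_slice_t {F : ℝ × ℝ → ℝ} (hF : Differentiable ℝ F) (z : ℝ × ℝ) :
    HasDerivAt (fun s => F (s, z.2)) (Dt F z) z.1 := by
  have h : HasDerivAt (fun s : ℝ => (s, z.2)) ((1 : ℝ), (0 : ℝ)) z.1 :=
    (hasDerivAt_id z.1).prodMk (hasDerivAt_const z.1 z.2)
  have h2 : HasDerivAt (fun s => F (s, z.2)) (fderiv ℝ F z (1, 0)) z.1 := by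
    simpa [Function.comp_def] using (hF z).hasFDerivAt.comp_hasDerivAt z.1 h
  have : Dt F z = fderiv ℝ F z (1, 0) := h2.deriv
  rw [this]; exact h2

lemma hasDerivAt_slice_x {F : ℝ × ℝ → ℝ} (hF : Differentiable ℝ F) (z : ℝ × ℝ) :
    HasDerivAt (fun y => F (z.1, y)) (Dx F z) z.2 := by
  have h : HasDerivAt (fun y : ℝ => (z.1, y)) ((0 : ℝ), (1 : ℝ)) z.2 :=
    (hasDerivAt_const z.2 z.1).prodMk (hasDerivAt_id z.2)
  have h2 : HasDerivAt (fun y => F (z.1, y)) (fderiv ℝ F z (0, 1)) z.2 := by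
    simpa [Function.comp_def] using (hF z).hasFDerivAt.comp_hasDerivAt z.2 h
  have : Dx F z = fderiv ℝ F z (0, 1) := h2.deriv
  rw [this]; exact h2

lemma Dt_eq_fderiv {F : ℝ × ℝ → ℝ} (hF : Differentiable ℝ F) (z : ℝ × ℝ) :
    Dt F z = fderiv ℝ F z (1, 0) := by
  have h : HasDerivAt (fun s : ℝ => (s, z.2)) ((1 : ℝ), (0 : ℝ)) z.1 :=
    (hasDerivAt_id z.1).prodMk (hasDerivAt_const z.1 z.2)
  have h2 : HasDerivAt (fun s => F (s, z.2)) (fderiv ℝ F z (1, 0)) z.1 := by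
    simpa [Function.comp_def] using (hF z).hasFDerivAt.comp_hasDerivAt z.1 h
  exact h2.deriv

lemma Dx_eq_fderiv {F : ℝ × ℝ → ℝ} (hF : Differentiable ℝ F) (z : ℝ × ℝ) :
    Dx F z = fderiv ℝ F z (0, 1) := by
  have h : HasDerivAt (fun y : ℝ => (z.1, y)) ((0 : ℝ), (1 : ℝ)) z.2 :=
    (hasDerivAt_const z.2 z.1).prodMk (hasDerivAt_id z.2)
  have h2 : HasDerivAt (fun y => F (z.1, y)) (fderiv ℝ F z (0, 1)) z.2 := by
    simpa [Function.comp_def] using (hF z).hasFDerivAt.comp_hasDerivAt z.2 h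
  exact h2.deriv

lemma contDiff_Dt {F : ℝ × ℝ → ℝ} (hF : ContDiff ℝ (⊤ : ℕ∞) F) : ContDiff ℝ (⊤ : ℕ∞) (Dt F) := by
  have : Dt F = fun z => fderiv ℝ F z (1, 0) :=
    funext fun z => Dt_eq_fderiv (hF.differentiable (by simp)) z
  rw [this]
  exact (hF.fderiv_right (by simp)).clm_apply contDiff_const

lemma contDiff_Dx {F : ℝ × ℝ → ℝ} (hF : ContDiff ℝ (⊤ : ℕ∞) F) : ContDiff ℝ (⊤ : ℕ∞) (Dx F) := by
  have : Dx F = fun z => fderiv ℝ F z (0, 1) :=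
    funext fun z => Dx_eq_fderiv (hF.differentiable (by simp)) z
  rw [this]
  exact (hF.fderiv_right (by simp)).clm_apply contDiff_const

lemma Dt_Dx_comm {p : ℝ × ℝ → ℝ} (hp : ContDiff ℝ (⊤ : ℕ∞) p) (z : ℝ × ℝ) :
    Dt (Dx p) z = Dx (Dt p) z := by
  have hd : Differentiable ℝ p := hp.differentiable (by simp)
  have hΦ : ∀ w, HasFDerivAt p (fderiv ℝ p w) w := fun w => (hd w).hasFDerivAt
  have hΦd : Differentiable ℝ (fderiv ℝ p) := (hp.fderiv_right (m := (⊤ : ℕ∞)) (by simp)).differentiable (by simp)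
  have hΦ' : HasFDerivAt (fderiv ℝ p) (fderiv ℝ (fderiv ℝ p) z) z := (hΦd z).hasFDerivAt
  set f'' := fderiv ℝ (fderiv ℝ p) z with hf''
  have hsym := second_derivative_symmetric hΦ hΦ' ((1:ℝ), (0:ℝ)) ((0:ℝ), (1:ℝ))
  -- Dt (Dx p) z = f'' (1,0) (0,1)
  have e1 : (fun s => Dx p (s, z.2)) = fun s => fderiv ℝ p (s, z.2) (0, 1) :=
    funext fun s => Dx_eq_fderiv hd (s, z.2)
  have e2 : (fun y => Dt p (z.1, y)) = fun y => fderiv ℝ p (z.1, y) (1, 0) :=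
    funext fun y => Dt_eq_fderiv hd (z.1, y)
  have h1 : HasDerivAt (fun s => fderiv ℝ p (s, z.2)) (f'' (1, 0)) z.1 := by
    simpa [Function.comp_def] using hΦ'.comp_hasDerivAt z.1
      ((hasDerivAt_id z.1).prodMk (hasDerivAt_const z.1 z.2))
  have h2 : HasDerivAt (fun y => fderiv ℝ p (z.1, y)) (f'' (0, 1)) z.2 := by
    simpa [Function.comp_def] using hΦ'.comp_hasDerivAt z.2
      ((hasDerivAt_const z.2 z.1).prodMk (hasDerivAt_id z.2))
  have h1' : HasDerivAt (fun s => fderiv ℝ p (s, z.2) (0, 1)) (f'' (1, 0) (0, 1)) z.1 := by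
    simpa using h1.clm_apply (hasDerivAt_const z.1 ((0:ℝ), (1:ℝ)))
  have h2' : HasDerivAt (fun y => fderiv ℝ p (z.1, y) (1, 0)) (f'' (0, 1) (1, 0)) z.2 := by
    simpa using h2.clm_apply (hasDerivAt_const z.2 ((1:ℝ), (0:ℝ)))
  have v1 : Dt (Dx p) z = f'' (1, 0) (0, 1) := by
    show deriv (fun s => Dx p (s, z.2)) z.1 = _
    rw [e1]; exact h1'.deriv
  have v2 : Dx (Dt p) z = f'' (0, 1) (1, 0) := by
    show deriv (fun y => Dt p (z.1, y)) z.2 = _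
    rw [e2]; exact h2'.deriv
  rw [v1, v2, hsym]

/-- Nonlocal conservation laws of the first-layer potential system:
`T₂ = −(u + μ pₓ)`, `Φ₂ = c² p + β pₜ` and
`T₃ = x f(p) + t (u + μ pₓ)`, `Φ₃ = −c² t p − β t pₜ − x (u + μ pₓ)`. -/
theorem firstLayerPotential_conservation_laws
    (f : ℝ → ℝ) (hf : ContDiff ℝ (⊤ : ℕ∞) f) (β c μ : ℝ)
    (p u : ℝ × ℝ → ℝ) (hp : ContDiff ℝ (⊤ : ℕ∞) p) (hu : ContDiff ℝ (⊤ : ℕ∞) u)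
    (hsys : FirstLayerPotentialSystem f β c μ p u) :
    ∀ z : ℝ × ℝ,
      (Dt (fun w => -(u w + μ * Dx p w)) z
        + Dx (fun w => c ^ 2 * p w + β * Dt p w) z = 0) ∧
      (Dt (fun w => w.2 * f (p w) + w.1 * (u w + μ * Dx p w)) z
        + Dx (fun w => -(c ^ 2) * w.1 * p w - β * w.1 * Dt p w
            - w.2 * (u w + μ * Dx p w)) z = 0) := by
  intro z
  obtain ⟨h1, h2⟩ := hsys z
  have hcomm := Dt_Dx_comm hp z
  have hdp := hp.differentiable (by simp)
  have hdu := hu.differentiable (by simp)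
  have hdxp := (contDiff_Dx hp).differentiable (by simp)
  have hdtp := (contDiff_Dt hp).differentiable (by simp)
  obtain ⟨t0, x0⟩ := z
  set z : ℝ × ℝ := (t0, x0) with hz
  constructor
  · have hT : HasDerivAt (fun s => -(u (s, x0) + μ * Dx p (s, x0)))
        (-(Dt u z + μ * Dt (Dx p) z)) t0 :=
      ((hasDerivAt_slice_t hdu z).add ((hasDerivAt_slice_t hdxp z).const_mul μ)).neg
    have hΦ : HasDerivAt (fun y => c ^ 2 * p (t0, y) + β * Dt p (t0, y))
        (c ^ 2 * Dx p z + β * Dx (Dt p) z) x0 :=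
      ((hasDerivAt_slice_x hdp z).const_mul (c ^ 2)).add
        ((hasDerivAt_slice_x hdtp z).const_mul β)
    have eT : Dt (fun w => -(u w + μ * Dx p w)) z = -(Dt u z + μ * Dt (Dx p) z) := hT.deriv
    have eΦ : Dx (fun w => c ^ 2 * p w + β * Dt p w) z
        = c ^ 2 * Dx p z + β * Dx (Dt p) z := hΦ.deriv
    rw [eT, eΦ, h2, ← hcomm]; ring
  · have hfp : HasDerivAt (fun s => f (p (s, x0))) (deriv f (p z) * Dt p z) t0 :=
      ((hf.differentiable (by simp) (p z)).hasDerivAt).comp t0 (hasDerivAt_slice_t hdp z)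
    have hG : HasDerivAt (fun s => u (s, x0) + μ * Dx p (s, x0))
        (Dt u z + μ * Dt (Dx p) z) t0 :=
      (hasDerivAt_slice_t hdu z).add ((hasDerivAt_slice_t hdxp z).const_mul μ)
    have hT : HasDerivAt (fun s => x0 * f (p (s, x0)) + s * (u (s, x0) + μ * Dx p (s, x0)))
        (x0 * (deriv f (p z) * Dt p z)
          + (1 * (u z + μ * Dx p z) + t0 * (Dt u z + μ * Dt (Dx p) z))) t0 :=
      (hfp.const_mul x0).add ((hasDerivAt_id' t0).mul hG)
    have hGx : HasDerivAt (fun y => u (t0, y) + μ * Dx p (t0, y))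
        (Dx u z + μ * Dx (Dx p) z) x0 :=
      (hasDerivAt_slice_x hdu z).add ((hasDerivAt_slice_x hdxp z).const_mul μ)
    have hΦ : HasDerivAt (fun y => -(c ^ 2) * t0 * p (t0, y) - β * t0 * Dt p (t0, y)
          - y * (u (t0, y) + μ * Dx p (t0, y)))
        ((-(c ^ 2) * t0 * Dx p z - β * t0 * Dx (Dt p) z)
          - (1 * (u z + μ * Dx p z) + x0 * (Dx u z + μ * Dx (Dx p) z))) x0 :=
      (((hasDerivAt_slice_x hdp z).const_mul (-(c ^ 2) * t0)).sub
        ((hasDerivAt_slice_x hdtp z).const_mul (β * t0))).sub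
        ((hasDerivAt_id' x0).mul hGx)
    have eT : Dt (fun w => w.2 * f (p w) + w.1 * (u w + μ * Dx p w)) z
        = x0 * (deriv f (p z) * Dt p z)
          + (1 * (u z + μ * Dx p z) + t0 * (Dt u z + μ * Dt (Dx p) z)) := hT.deriv
    have eΦ : Dx (fun w => -(c ^ 2) * w.1 * p w - β * w.1 * Dt p w
          - w.2 * (u w + μ * Dx p w)) z
        = (-(c ^ 2) * t0 * Dx p z - β * t0 * Dx (Dt p) z)
          - (1 * (u z + μ * Dx p z) + x0 * (Dx u z + μ * Dx (Dx p) z)) := hΦ.deriv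
    rw [eT, eΦ, h1, h2, ← hcomm]; ring
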